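/- Let n ≥ 1, m ≥ 0, T > 0, and let a : ℝⁿ → ℝⁿ be measurable with ‖a‖ := esssup_x (1+|x|)^{n+1+m} |a(x)| < ∞. Then there is a constant C₀ = C₀(n,m) such that for all t ∈ (0,T] and almost every x ∈ ℝⁿ, (1+|x|)^{n+1+m} |e^{tΔ}a(x)| ≤ C₀ (1 + T^{(m+1)/2}) ‖a‖, where e^{tΔ}a = g_t * a is the heat semigroup. -/

import Mathlib

/-!
Write `N = n + 1 + m` and split the convolution at `‖y‖ = ‖x‖ / 2`. On the far part the weight
`(1 + ‖x‖) ^ N` is at most `2 ^ N` times that of `y`, so the decay of `a` pays for it and the heat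
kernel integrates to `1`. On the near part `‖x - y‖ ≥ ‖x‖ / 2`, and the Gaussian bound
`g_t(z) ‖z‖ ^ (n + j) ≤ (n + j)! (2 √t) ^ j` with `j = m + 1` pays for the weight of `x`, while
`(1 + ‖y‖) ^ (-N)` is integrable because `N > n`. For `‖x‖ ≤ 1` the weight is at most `2 ^ N`.
-/

open MeasureTheory Real
open scoped Nat

/-- The Gaussian heat kernel on ℝⁿ. -/
noncomputable def heatKernel (n : ℕ) (t : ℝ) (x : EuclideanSpace ℝ (Fin n)) : ℝ :=
  (4 * Real.pi * t) ^ (-(n : ℝ) / 2) * Real.exp (-‖x‖ ^ 2 / (4 * t))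

theorem pow_mul_exp_neg_sq_le_factorial (k : ℕ) {u : ℝ} (hu : 0 ≤ u) :
    u ^ k * exp (-u ^ 2) ≤ k ! := by
  have hk : (1 : ℝ) ≤ k ! := by exact_mod_cast k.factorial_pos
  rcases le_total u 1 with h | h
  · calc u ^ k * exp (-u ^ 2) ≤ 1 * 1 := by
          gcongr
          · exact pow_le_one₀ hu h
          · exact exp_le_one_iff.mpr (by nlinarith)
      _ ≤ k ! := by simpa using hk
  · have hexp : exp (-u ^ 2) ≤ exp (-u) := exp_le_exp.mpr (by nlinarith)
    calc u ^ k * exp (-u ^ 2) ≤ u ^ k / exp u := by rw [div_eq_mul_inv, ← exp_neg]; gcongr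
      _ ≤ k ! := by
        rw [div_le_iff₀ (exp_pos u), ← div_le_iff₀' (by positivity)]
        exact pow_div_factorial_le_exp _ hu k

section HeatKernel

variable {n : ℕ} {t : ℝ}

theorem heatKernel_nonneg (ht : 0 ≤ t) (z : EuclideanSpace ℝ (Fin n)) : 0 ≤ heatKernel n t z :=
  mul_nonneg (rpow_nonneg (by positivity) _) (exp_nonneg _)

theorem integral_heatKernel (ht : 0 < t) :
    ∫ z : EuclideanSpace ℝ (Fin n), heatKernel n t z = 1 := by
  have hexp : ∀ z : EuclideanSpace ℝ (Fin n),
      exp (-‖z‖ ^ 2 / (4 * t)) = exp (-(1 / (4 * t)) * ‖z‖ ^ 2) := fun z => by ring_nf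
  simp_rw [heatKernel, integral_const_mul, hexp,
    GaussianFourier.integral_rexp_neg_mul_sq_norm (by positivity : 0 < 1 / (4 * t)),
    finrank_euclideanSpace_fin, show π / (1 / (4 * t)) = 4 * π * t by field_simp,
    ← rpow_add (by positivity : 0 < 4 * π * t), neg_div, neg_add_cancel, rpow_zero]

theorem integrable_heatKernel (ht : 0 < t) : Integrable (heatKernel n t) :=
  .of_integral_ne_zero (by rw [integral_heatKernel ht]; exact one_ne_zero)

theorem heatKernel_mul_norm_pow_le (ht : 0 < t) (j : ℕ) (z : EuclideanSpace ℝ (Fin n)) :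
    heatKernel n t z * ‖z‖ ^ (n + j) ≤ (n + j)! * (2 * √t) ^ j := by
  set s := 2 * √t
  have hs : 0 < s := by positivity
  have hs2 : 4 * t = s ^ 2 := by rw [mul_pow, sq_sqrt ht.le]; norm_num
  have hprefactor : (4 * π * t) ^ (-(n : ℝ) / 2) * s ^ n ≤ 1 := by
    have hs_pow : (s ^ 2) ^ (-(n : ℝ) / 2) = (s ^ n)⁻¹ := by
      rw [← rpow_natCast_mul hs.le, show ((2 : ℕ) : ℝ) * (-(n : ℝ) / 2) = -n by push_cast; ring,
        rpow_neg hs.le, rpow_natCast]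
    rw [mul_right_comm, hs2, mul_rpow (by positivity) pi_pos.le, hs_pow, mul_right_comm,
      inv_mul_cancel₀ (pow_pos hs n).ne', one_mul]
    exact rpow_le_one_of_one_le_of_nonpos (by linarith [pi_gt_three])
      (div_nonpos_of_nonpos_of_nonneg (neg_nonpos.mpr n.cast_nonneg) zero_le_two)
  obtain ⟨u, hu, hz⟩ : ∃ u, 0 ≤ u ∧ ‖z‖ = s * u := ⟨‖z‖ / s, by positivity, by field_simp⟩
  calc heatKernel n t z * ‖z‖ ^ (n + j)
      = ((4 * π * t) ^ (-(n : ℝ) / 2) * s ^ n) * s ^ j * (u ^ (n + j) * exp (-u ^ 2)) := by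
        rw [heatKernel, hz, hs2, mul_pow, neg_div (s ^ 2), mul_div_cancel_left₀ _ (by positivity)]
        ring
    _ ≤ 1 * s ^ j * (n + j)! := by
        gcongr
        exact pow_mul_exp_neg_sq_le_factorial _ hu
    _ = (n + j)! * s ^ j := by ring

end HeatKernel

theorem one_add_norm_pow_le_two_pow_mul {E : Type*} [SeminormedAddCommGroup E] {x y : E}
    (h : ‖x‖ ≤ 2 * ‖y‖) (k : ℕ) : (1 + ‖x‖) ^ k ≤ 2 ^ k * (1 + ‖y‖) ^ k := by
  rw [← mul_pow]
  gcongr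
  linarith [norm_nonneg y]

theorem one_add_norm_pow_le_two_pow_mul_norm_pow {E : Type*} [SeminormedAddCommGroup E] {x : E}
    (h : 1 ≤ ‖x‖) (k : ℕ) : (1 + ‖x‖) ^ k ≤ 2 ^ k * ‖x‖ ^ k := by
  rw [← mul_pow]
  gcongr
  linarith

theorem integrable_one_add_norm_pow_inv {E : Type*} [NormedAddCommGroup E] [NormedSpace ℝ E]
    [FiniteDimensional ℝ E] [MeasurableSpace E] [BorelSpace E] (μ : Measure E)
    [μ.IsAddHaarMeasure] {k : ℕ} (hk : Module.finrank ℝ E < k) :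
    Integrable (fun y : E => ((1 + ‖y‖) ^ k)⁻¹) μ := by
  refine (integrable_one_add_norm (r := k) (by exact_mod_cast hk)).congr (.of_forall fun y => ?_)
  simp only [rpow_neg (by positivity : (0 : ℝ) ≤ 1 + ‖y‖), rpow_natCast]

section WeightedBound

variable {n m : ℕ} {t M : ℝ}

theorem heatKernel_sub_mul_norm_pow_le (ht : 0 < t) (j : ℕ) {x y : EuclideanSpace ℝ (Fin n)}
    (hy : 2 * ‖y‖ ≤ ‖x‖) :
    heatKernel n t (x - y) * ‖x‖ ^ (n + j) ≤ 2 ^ (n + j) * ((n + j)! * (2 * √t) ^ j) := by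
  have hxy : ‖x‖ ≤ 2 * ‖x - y‖ := by linarith [norm_sub_norm_le x y]
  have hg := heatKernel_nonneg ht.le (x - y)
  calc heatKernel n t (x - y) * ‖x‖ ^ (n + j)
      ≤ heatKernel n t (x - y) * (2 * ‖x - y‖) ^ (n + j) := by gcongr
    _ = 2 ^ (n + j) * (heatKernel n t (x - y) * ‖x - y‖ ^ (n + j)) := by ring
    _ ≤ 2 ^ (n + j) * ((n + j)! * (2 * √t) ^ j) :=
        mul_le_mul_of_nonneg_left (heatKernel_mul_norm_pow_le ht j _) (by positivity)

theorem one_add_norm_pow_mul_heatKernel_sub_mul_le (ht : 0 < t) (hM : 0 ≤ M)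
    {x y : EuclideanSpace ℝ (Fin n)} (hx : 1 ≤ ‖x‖) {r : ℝ} (hr : 0 ≤ r)
    (hry : (1 + ‖y‖) ^ (n + 1 + m) * r ≤ M) :
    (1 + ‖x‖) ^ (n + 1 + m) * (heatKernel n t (x - y) * r) ≤
      2 ^ (n + 1 + m) * M * heatKernel n t (x - y) +
        4 ^ (n + 1 + m) * (n + 1 + m)! * (2 * √t) ^ (m + 1) * M * ((1 + ‖y‖) ^ (n + 1 + m))⁻¹ := by
  have hg := heatKernel_nonneg ht.le (x - y)
  rcases le_total ‖x‖ (2 * ‖y‖) with hfar | hnear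
  · calc (1 + ‖x‖) ^ (n + 1 + m) * (heatKernel n t (x - y) * r)
        ≤ 2 ^ (n + 1 + m) * (1 + ‖y‖) ^ (n + 1 + m) * (heatKernel n t (x - y) * r) := by
          gcongr
          exact one_add_norm_pow_le_two_pow_mul hfar _
      _ = 2 ^ (n + 1 + m) * heatKernel n t (x - y) * ((1 + ‖y‖) ^ (n + 1 + m) * r) := by ring
      _ ≤ 2 ^ (n + 1 + m) * heatKernel n t (x - y) * M := by gcongr
      _ ≤ _ := by
          rw [mul_right_comm]
          exact le_add_of_nonneg_right (by positivity)
  · have hgx : (1 + ‖x‖) ^ (n + 1 + m) * heatKernel n t (x - y) ≤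
        4 ^ (n + 1 + m) * (n + 1 + m)! * (2 * √t) ^ (m + 1) := by
      have hdecay := heatKernel_sub_mul_norm_pow_le ht (m + 1) hnear
      rw [show n + (m + 1) = n + 1 + m by ring] at hdecay
      calc (1 + ‖x‖) ^ (n + 1 + m) * heatKernel n t (x - y)
          ≤ 2 ^ (n + 1 + m) * ‖x‖ ^ (n + 1 + m) * heatKernel n t (x - y) := by
            gcongr
            exact one_add_norm_pow_le_two_pow_mul_norm_pow hx _
        _ ≤ 2 ^ (n + 1 + m) * (2 ^ (n + 1 + m) * ((n + 1 + m)! * (2 * √t) ^ (m + 1))) := by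
            rw [mul_assoc, mul_comm (‖x‖ ^ _)]
            gcongr
        _ = _ := by
            rw [show (4 : ℝ) ^ (n + 1 + m) = 2 ^ (n + 1 + m) * 2 ^ (n + 1 + m) by
              rw [← mul_pow]; norm_num]
            ring
    have hr' : r ≤ M * ((1 + ‖y‖) ^ (n + 1 + m))⁻¹ := by
      rw [← div_eq_mul_inv, le_div_iff₀ (by positivity), mul_comm]
      exact hry
    calc (1 + ‖x‖) ^ (n + 1 + m) * (heatKernel n t (x - y) * r)
        = (1 + ‖x‖) ^ (n + 1 + m) * heatKernel n t (x - y) * r := by ring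
      _ ≤ 4 ^ (n + 1 + m) * (n + 1 + m)! * (2 * √t) ^ (m + 1) *
            (M * ((1 + ‖y‖) ^ (n + 1 + m))⁻¹) := by gcongr
      _ ≤ _ := by
          rw [← mul_assoc]
          exact le_add_of_nonneg_left (by positivity)

theorem one_add_norm_pow_mul_integral_heatKernel_sub_mul_le_of_one_le (ht : 0 < t) (hM : 0 ≤ M)
    {f : EuclideanSpace ℝ (Fin n) → ℝ} (hf0 : ∀ y, 0 ≤ f y)
    (hf : ∀ᵐ y, (1 + ‖y‖) ^ (n + 1 + m) * f y ≤ M) {x : EuclideanSpace ℝ (Fin n)} (hx : 1 ≤ ‖x‖) :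
    (1 + ‖x‖) ^ (n + 1 + m) * ∫ y, heatKernel n t (x - y) * f y ≤
      2 ^ (n + 1 + m) * M + 4 ^ (n + 1 + m) * (n + 1 + m)! * (2 * √t) ^ (m + 1) * M *
        ∫ y : EuclideanSpace ℝ (Fin n), ((1 + ‖y‖) ^ (n + 1 + m))⁻¹ := by
  have hg : Integrable fun y => heatKernel n t (x - y) := (integrable_heatKernel ht).comp_sub_left x
  have hw := integrable_one_add_norm_pow_inv (volume : Measure (EuclideanSpace ℝ (Fin n)))
    (k := n + 1 + m) (by rw [finrank_euclideanSpace_fin]; omega)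
  rw [← integral_const_mul]
  calc ∫ y, (1 + ‖x‖) ^ (n + 1 + m) * (heatKernel n t (x - y) * f y)
      ≤ ∫ y, (2 ^ (n + 1 + m) * M * heatKernel n t (x - y) +
          4 ^ (n + 1 + m) * (n + 1 + m)! * (2 * √t) ^ (m + 1) * M *
            ((1 + ‖y‖) ^ (n + 1 + m))⁻¹) :=
        integral_mono_of_nonneg
          (.of_forall fun y => mul_nonneg (by positivity)
            (mul_nonneg (heatKernel_nonneg ht.le (x - y)) (hf0 y)))
          ((hg.const_mul _).add (hw.const_mul _))
          (hf.mono fun y hy => one_add_norm_pow_mul_heatKernel_sub_mul_le ht hM hx (hf0 y) hy)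
    _ = _ := by
        rw [integral_add (hg.const_mul _) (hw.const_mul _), integral_const_mul, integral_const_mul,
          integral_sub_left_eq_self (heatKernel n t) volume x, integral_heatKernel ht, mul_one]

theorem one_add_norm_pow_mul_integral_heatKernel_sub_mul_le_of_le_one (ht : 0 < t)
    {k : ℕ} {f : EuclideanSpace ℝ (Fin n) → ℝ} (hf0 : ∀ y, 0 ≤ f y)
    (hf : ∀ᵐ y, (1 + ‖y‖) ^ k * f y ≤ M) {x : EuclideanSpace ℝ (Fin n)} (hx : ‖x‖ ≤ 1) :
    (1 + ‖x‖) ^ k * ∫ y, heatKernel n t (x - y) * f y ≤ 2 ^ k * M := by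
  have hg : Integrable fun y => heatKernel n t (x - y) := (integrable_heatKernel ht).comp_sub_left x
  have hint : ∫ y, heatKernel n t (x - y) * f y ≤ M := by
    calc ∫ y, heatKernel n t (x - y) * f y ≤ ∫ y, M * heatKernel n t (x - y) := by
          refine integral_mono_of_nonneg
            (.of_forall fun y => mul_nonneg (heatKernel_nonneg ht.le _) (hf0 y)) (hg.const_mul M)
            (hf.mono fun y hy => ?_)
          have hfM : f y ≤ M :=
            (le_mul_of_one_le_left (hf0 y) (one_le_pow₀ (by simp))).trans hy
          show heatKernel n t (x - y) * f y ≤ M * heatKernel n t (x - y)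
          rw [mul_comm M]
          exact mul_le_mul_of_nonneg_left hfM (heatKernel_nonneg ht.le _)
      _ = M := by
          rw [integral_const_mul, integral_sub_left_eq_self (heatKernel n t) volume x,
            integral_heatKernel ht, mul_one]
  exact mul_le_mul (pow_le_pow_left₀ (by positivity) (by linarith) k) hint
    (integral_nonneg fun y => mul_nonneg (heatKernel_nonneg ht.le _) (hf0 y)) (by positivity)

theorem one_add_norm_pow_mul_integral_heatKernel_sub_mul_le (ht : 0 < t) (hM : 0 ≤ M)
    {f : EuclideanSpace ℝ (Fin n) → ℝ} (hf0 : ∀ y, 0 ≤ f y)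
    (hf : ∀ᵐ y, (1 + ‖y‖) ^ (n + 1 + m) * f y ≤ M) (x : EuclideanSpace ℝ (Fin n)) :
    (1 + ‖x‖) ^ (n + 1 + m) * ∫ y, heatKernel n t (x - y) * f y ≤
      2 ^ (n + 1 + m) * M + 4 ^ (n + 1 + m) * (n + 1 + m)! * (2 * √t) ^ (m + 1) * M *
        ∫ y : EuclideanSpace ℝ (Fin n), ((1 + ‖y‖) ^ (n + 1 + m))⁻¹ := by
  rcases le_total ‖x‖ 1 with hx | hx
  · exact (one_add_norm_pow_mul_integral_heatKernel_sub_mul_le_of_le_one ht hf0 hf hx).trans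
      (le_add_of_nonneg_right (by positivity))
  · exact one_add_norm_pow_mul_integral_heatKernel_sub_mul_le_of_one_le ht hM hf0 hf hx

end WeightedBound

theorem sqrt_pow_le_rpow {t T : ℝ} (ht : 0 ≤ t) (htT : t ≤ T) (k : ℕ) :
    √t ^ k ≤ T ^ ((k : ℝ) / 2) := by
  rw [sqrt_eq_rpow, ← rpow_natCast, ← rpow_mul ht, one_div_mul_eq_div]
  exact rpow_le_rpow ht htT (by positivity)

theorem heat_semigroup_weighted_bound_general (n m : ℕ) :
    ∃ C₀ > 0, ∀ (T : ℝ), 0 < T →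
      ∀ (a : EuclideanSpace ℝ (Fin n) → EuclideanSpace ℝ (Fin n)), Measurable a →
      ∀ (M : ℝ),
      (∀ᵐ x ∂(volume : Measure (EuclideanSpace ℝ (Fin n))),
        (1 + ‖x‖) ^ (n + 1 + m) * ‖a x‖ ≤ M) →
      ∀ t ∈ Set.Ioc (0 : ℝ) T,
        ∀ᵐ x ∂(volume : Measure (EuclideanSpace ℝ (Fin n))),
          (1 + ‖x‖) ^ (n + 1 + m) * ‖∫ y, heatKernel n t (x - y) • a y‖ ≤
            C₀ * (1 + T ^ (((m : ℝ) + 1) / 2)) * M := by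
  set C := ∫ y : EuclideanSpace ℝ (Fin n), ((1 + ‖y‖) ^ (n + 1 + m))⁻¹
  set K : ℝ := 4 ^ (n + 1 + m) * (n + 1 + m)! * 2 ^ (m + 1)
  have hC : 0 ≤ C := integral_nonneg fun _ => by positivity
  refine ⟨2 ^ (n + 1 + m) + K * C, by positivity, fun T hT a _ M hM t ⟨ht, htT⟩ => ?_⟩
  obtain ⟨x₀, hx₀⟩ := hM.exists
  have hM0 : 0 ≤ M := (by positivity : (0 : ℝ) ≤ _).trans hx₀
  set S := T ^ (((m : ℝ) + 1) / 2)
  have hS : (2 * √t) ^ (m + 1) ≤ 2 ^ (m + 1) * S := by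
    rw [mul_pow]
    gcongr
    simpa [S] using sqrt_pow_le_rpow ht.le htT (m + 1)
  refine .of_forall fun x => ?_
  have hnorm : ‖∫ y, heatKernel n t (x - y) • a y‖ ≤ ∫ y, heatKernel n t (x - y) * ‖a y‖ :=
    (norm_integral_le_integral_norm _).trans_eq <| integral_congr_ae <| .of_forall fun y => by
      simp only [norm_smul, norm_of_nonneg (heatKernel_nonneg ht.le (x - y))]
  calc (1 + ‖x‖) ^ (n + 1 + m) * ‖∫ y, heatKernel n t (x - y) • a y‖
      ≤ (1 + ‖x‖) ^ (n + 1 + m) * ∫ y, heatKernel n t (x - y) * ‖a y‖ := by gcongr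
    _ ≤ 2 ^ (n + 1 + m) * M + 4 ^ (n + 1 + m) * (n + 1 + m)! * (2 * √t) ^ (m + 1) * M * C :=
        one_add_norm_pow_mul_integral_heatKernel_sub_mul_le ht hM0 (fun y => norm_nonneg _) hM x
    _ ≤ 2 ^ (n + 1 + m) * M + K * S * M * C := by
        rw [show K * S = 4 ^ (n + 1 + m) * (n + 1 + m)! * (2 ^ (m + 1) * S) by ring]
        gcongr
    _ ≤ (2 ^ (n + 1 + m) + K * C) * (1 + S) * M := by
        have hS0 : 0 ≤ S := by positivity
        nlinarith [mul_nonneg (mul_nonneg (by positivity : (0 : ℝ) ≤ K) hC) hM0,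
          mul_nonneg (mul_nonneg (by positivity : (0 : ℝ) ≤ 2 ^ (n + 1 + m)) hS0) hM0]

/-- There is C₀ = C₀(n,m) such that for any T > 0 and any measurable field a
with esssup (1+|x|)^{n+1+m}|a(x)| ≤ M, the heat evolution e^{tΔ}a = g_t * a satisfies, for
all t ∈ (0,T] and a.e. x, (1+|x|)^{n+1+m}|e^{tΔ}a(x)| ≤ C₀ (1+T^{(m+1)/2}) M. -/
theorem heat_semigroup_weighted_bound (n m : ℕ) (hn : 1 ≤ n) :
    ∃ C₀ > 0, ∀ (T : ℝ), 0 < T →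
      ∀ (a : EuclideanSpace ℝ (Fin n) → EuclideanSpace ℝ (Fin n)), Measurable a →
      ∀ (M : ℝ),
      (∀ᵐ x ∂(volume : Measure (EuclideanSpace ℝ (Fin n))),
        (1 + ‖x‖) ^ (n + 1 + m) * ‖a x‖ ≤ M) →
      ∀ t ∈ Set.Ioc (0 : ℝ) T,
        ∀ᵐ x ∂(volume : Measure (EuclideanSpace ℝ (Fin n))),
          (1 + ‖x‖) ^ (n + 1 + m) * ‖∫ y, heatKernel n t (x - y) • a y‖ ≤
            C₀ * (1 + T ^ (((m : ℝ) + 1) / 2)) * M :=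
  heat_semigroup_weighted_bound_general n m
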